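/- Let p be a prime, λ ∈ ℚ_p^×, n ≥ 2, γ₁ < γ₂ in ℤ ∪ {−∞, +∞}, and let X = {x ∈ ℚ_p : γ₁ < v(x) < γ₂ and λ·x is a nonzero n-th power}. Suppose y₀ ∈ X satisfies v(y₀) + 2·v(n) < −1. Then the ball B_{−1}(y₀) = {x : v(x − y₀) > −1} is contained in X. -/

import Mathlib

/-- The ball `B_γ(a) = {x : v(x - a) > γ}` in `ℚ_p`. -/
def pBall (p : ℕ) [Fact p.Prime] (γ : ℤ) (a : ℚ_[p]) : Set ℚ_[p] :=
  {x : ℚ_[p] | ‖x - a‖ < (p : ℝ) ^ (-γ)}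

/-- The cell `{x ∈ ℚ_p : γ₁ < v(x) < γ₂ ∧ P_n(λ·x)}`, where `γ₁, γ₂ ∈ ℤ ∪ {−∞, +∞}`
and `P_n(z)` means `z` is a nonzero `n`-th power. -/
def pCell (p : ℕ) [Fact p.Prime] (γ₁ γ₂ : WithBot (WithTop ℤ)) (lam : ℚ_[p]) (n : ℕ) :
    Set ℚ_[p] :=
  {x : ℚ_[p] | x ≠ 0 ∧ γ₁ < ((x.valuation : WithTop ℤ) : WithBot (WithTop ℤ)) ∧
    ((x.valuation : WithTop ℤ) : WithBot (WithTop ℤ)) < γ₂ ∧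
    ∃ z : ℚ_[p], z ≠ 0 ∧ z ^ n = lam * x}

/-!
Hensel's lemma applied to `X ^ n - a` at the approximate root `1` shows that every `a` with
`‖a - 1‖ < ‖n‖ ^ 2` is an `n`-th power. Hence the cell is open around each of its points `y`
with radius `‖n‖ ^ 2 * ‖y‖`: for `x` that close to `y`, the quotient `x / y` is such an `a`,
so `λ x = λ y · (x / y)` is again an `n`-th power, and `‖x‖ = ‖y‖` since the ball is smaller
than `‖y‖`. The hypothesis `v(y₀) + 2 v(n) < -1` says exactly that this radius exceeds that of
`B_{-1}(y₀)`.
-/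

namespace PadicInt

variable {p : ℕ} [Fact p.Prime]

lemma exists_pow_eq_of_norm_sub_one_lt {n : ℕ} {a : ℤ_[p]}
    (ha : ‖a - 1‖ < ‖(n : ℤ_[p])‖ ^ 2) : ∃ z : ℤ_[p], z ^ n = a := by
  set F : Polynomial ℤ_[p] := Polynomial.X ^ n - Polynomial.C a
  have hF : F.aeval 1 = -(a - 1) := by simp [F]
  have hF' : F.derivative.aeval 1 = (n : ℤ_[p]) := by simp [F, Polynomial.derivative_X_pow]
  obtain ⟨z, hz, -⟩ := hensels_lemma (F := F) (a := 1) (by rwa [hF, hF', norm_neg])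
  exact ⟨z, sub_eq_zero.mp (by simpa [F] using hz)⟩

end PadicInt

namespace Padic

variable {p : ℕ} [Fact p.Prime]

lemma norm_natCast_le_one (n : ℕ) : ‖(n : ℚ_[p])‖ ≤ 1 := (n : ℤ_[p]).norm_le_one

lemma norm_eq_of_norm_sub_lt {x y : ℚ_[p]} (h : ‖x - y‖ < ‖y‖) : ‖x‖ = ‖y‖ := by
  simpa [h.le] using add_eq_max_of_ne h.ne

lemma valuation_eq_of_norm_eq {x y : ℚ_[p]} (hx : x ≠ 0) (hy : y ≠ 0) (h : ‖x‖ = ‖y‖) :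
    x.valuation = y.valuation := by
  have hp : (1 : ℝ) < p := mod_cast (Fact.out : p.Prime).one_lt
  rw [norm_eq_zpow_neg_valuation hx, norm_eq_zpow_neg_valuation hy] at h
  exact neg_injective ((zpow_right_strictMono₀ hp).injective h)

lemma exists_pow_eq_of_norm_sub_one_lt {n : ℕ} (hn : n ≠ 0) {a : ℚ_[p]}
    (ha : ‖a - 1‖ < ‖(n : ℚ_[p])‖ ^ 2) : ∃ z : ℚ_[p], z ≠ 0 ∧ z ^ n = a := by
  have hn1 : ‖(n : ℚ_[p])‖ ^ 2 ≤ 1 := pow_le_one₀ (norm_nonneg _) (norm_natCast_le_one n)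
  have ha1 : ‖a‖ = 1 := by simpa using norm_eq_of_norm_sub_lt (ha.trans_le (by simpa using hn1))
  obtain ⟨z, hz⟩ := PadicInt.exists_pow_eq_of_norm_sub_one_lt (a := ⟨a, ha1.le⟩) (n := n) ha
  have hza : (z : ℚ_[p]) ^ n = a := by simpa using congrArg ((↑) : ℤ_[p] → ℚ_[p]) hz
  exact ⟨z, ne_zero_pow hn (hza ▸ norm_ne_zero_iff.mp (ha1 ▸ one_ne_zero)), hza⟩

end Padic

variable {p : ℕ} [Fact p.Prime]

lemma mem_pCell_of_norm_sub_lt {γ₁ γ₂ : WithBot (WithTop ℤ)} {lam : ℚ_[p]} {n : ℕ} (hn : n ≠ 0)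
    {x y : ℚ_[p]} (hy : y ∈ pCell p γ₁ γ₂ lam n) (hxy : ‖x - y‖ < ‖(n : ℚ_[p])‖ ^ 2 * ‖y‖) :
    x ∈ pCell p γ₁ γ₂ lam n := by
  obtain ⟨hy0, hγ₁, hγ₂, z, hz, hzy⟩ := hy
  have hn1 : ‖(n : ℚ_[p])‖ ^ 2 ≤ 1 := pow_le_one₀ (norm_nonneg _) (Padic.norm_natCast_le_one n)
  have hnorm : ‖x‖ = ‖y‖ :=
    Padic.norm_eq_of_norm_sub_lt (hxy.trans_le (mul_le_of_le_one_left (norm_nonneg _) hn1))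
  have hx0 : x ≠ 0 := norm_ne_zero_iff.mp (hnorm ▸ norm_ne_zero_iff.mpr hy0)
  have hval := Padic.valuation_eq_of_norm_eq hx0 hy0 hnorm
  have hquot : ‖x / y - 1‖ < ‖(n : ℚ_[p])‖ ^ 2 := by
    rwa [div_sub_one hy0, norm_div, div_lt_iff₀ (norm_pos_iff.mpr hy0)]
  obtain ⟨w, hw, hwn⟩ := Padic.exists_pow_eq_of_norm_sub_one_lt hn hquot
  refine ⟨hx0, hval ▸ hγ₁, hval ▸ hγ₂, z * w, mul_ne_zero hz hw, ?_⟩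
  rw [mul_pow, hzy, hwn]
  field_simp

theorem stmt_4_general (p : ℕ) [Fact p.Prime] (lam : ℚ_[p]) (n : ℕ) (hn : 2 ≤ n)
    (γ₁ γ₂ : WithBot (WithTop ℤ)) (y₀ : ℚ_[p])
    (hy₀ : y₀ ∈ pCell p γ₁ γ₂ lam n)
    (hval : y₀.valuation + 2 * (n : ℚ_[p]).valuation < -1) :
    pBall p (-1) y₀ ⊆ pCell p γ₁ γ₂ lam n := by
  intro x hx
  have hn0 : (n : ℚ_[p]) ≠ 0 := Nat.cast_ne_zero.mpr (by omega)
  have hp : (1 : ℝ) < p := mod_cast (Fact.out : p.Prime).one_lt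
  refine mem_pCell_of_norm_sub_lt (by omega) hy₀ ?_
  calc ‖x - y₀‖ < (p : ℝ) ^ (1 : ℤ) := by simpa [pBall] using hx
    _ < (p : ℝ) ^ (-(y₀.valuation + 2 * (n : ℚ_[p]).valuation)) :=
        zpow_lt_zpow_right₀ hp (by omega)
    _ = ‖(n : ℚ_[p])‖ ^ 2 * ‖y₀‖ := by
        rw [← norm_pow, ← norm_mul, Padic.norm_eq_zpow_neg_valuation (by simp [hn0, hy₀.1]),
          Padic.valuation_mul (pow_ne_zero 2 hn0) hy₀.1, Padic.valuation_pow]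
        ring_nf

/-- If `y₀` lies in the cell `X` and `v(y₀) + 2·v(n) < -1`, then the ball
`B_{-1}(y₀)` is contained in `X`. -/
theorem stmt_4 (p : ℕ) [Fact p.Prime] (lam : ℚ_[p]) (hlam : lam ≠ 0) (n : ℕ) (hn : 2 ≤ n)
    (γ₁ γ₂ : WithBot (WithTop ℤ)) (hγ : γ₁ < γ₂) (y₀ : ℚ_[p])
    (hy₀ : y₀ ∈ pCell p γ₁ γ₂ lam n)
    (hval : y₀.valuation + 2 * (n : ℚ_[p]).valuation < -1) :
    pBall p (-1) y₀ ⊆ pCell p γ₁ γ₂ lam n :=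
  stmt_4_general p lam n hn γ₁ γ₂ y₀ hy₀ hval
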